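/- Let p be a prime, let E(x) = exp(∑_{j≥0} x^{p^j}/p^j) = ∑_{m≥0} E_m x^m be the Artin–Hasse exponential series (a power series with rational coefficients), and let γ be an element of a fixed algebraic closure of ℚ_p satisfying ∑_{j≥0} γ^{p^j}/p^j = 0 and ord_p(γ) = 1/(p−1). Then for every m ≥ 0, the coefficient λ_m := E_m·γ^m of E(γx) satisfies ord_p(λ_m) ≥ m/(p−1). -/

import Mathlib

/-!
The bound follows from the integrality of the coefficients `E_m`, since
`ord_p(E_m γ^m) = ord_p(E_m) + m / (p − 1)`.

Integrality is Dwork's argument. Writing `E = exp(S)` with `S = ∑ x^{p^j}/p^j`, the telescoping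
identity `p·S(x) = S(x^p) + p·x` gives `E(x)^p = E(x^p)·exp(px)`, and `exp(px) ≡ 1` modulo `p`
coefficientwise because `ord_p(k!) < k`. Suppose the coefficients of `E` below degree `n` are
integral and let `T` be the truncation of `E` below degree `n`. The `x^n`-coefficient of `E^p` is
that of `T^p` plus `p·E_n`, while that of `E(x^p)·exp(px)` is that of `T(x^p)` up to a multiple
of `p`. Since `T^p ≡ T(x^p)` modulo `p` (Frobenius), `p·E_n ≡ 0` modulo `p`, so `E_n` is integral.
-/

open scoped BigOperators

open PowerSeries in
/-- The series `∑_{j ≥ 0} x^{p^j} / p^j` (coefficient of `x^m` is `1/p^j` if `m = p^j`,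
and `0` otherwise; note `j ≤ p^j` so the truncation is harmless). -/
noncomputable def ahLog (p : ℕ) : PowerSeries ℚ :=
  PowerSeries.mk fun m => ∑ j ∈ Finset.range (m + 1),
    if p ^ j = m then (1 : ℚ) / (p : ℚ) ^ j else 0

open PowerSeries in
/-- The Artin–Hasse exponential `E(x) = exp(ahLog p)`, defined coefficientwise. -/
noncomputable def artinHasse (p : ℕ) : PowerSeries ℚ :=
  PowerSeries.mk fun m => ∑ n ∈ Finset.range (m + 1),
    (PowerSeries.coeff m ((ahLog p) ^ n)) / (n.factorial : ℚ)

open PowerSeries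

namespace PowerSeries

section Exp

variable {A : Type*} [CommRing A]

theorem eq_of_derivative_eq_mul [IsAddTorsionFree A] {h y z : A⟦X⟧}
    (hy : d⁄dX A y = h * y) (hz : d⁄dX A z = h * z)
    (h0 : constantCoeff y = constantCoeff z) : y = z := by
  ext n
  induction n using Nat.strong_induction_on with
  | _ n ih =>
    rcases n with _ | n
    · simpa only [coeff_zero_eq_constantCoeff] using h0
    · have hder : coeff n (d⁄dX A y) = coeff n (d⁄dX A z) := by
        rw [hy, hz, coeff_mul, coeff_mul]
        refine Finset.sum_congr rfl fun x hx => ?_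
        rw [ih x.2 (Nat.lt_succ_of_le (Finset.HasAntidiagonal.antidiagonal.snd_le hx))]
      rw [coeff_derivative, coeff_derivative, ← Nat.cast_succ, mul_comm, ← nsmul_eq_mul,
        mul_comm, ← nsmul_eq_mul] at hder
      exact (smul_right_inj n.succ_ne_zero).mp hder

theorem constantCoeff_subst_of_constantCoeff_zero {a f : A⟦X⟧} (ha : constantCoeff a = 0) :
    constantCoeff (f.subst a) = constantCoeff f := by
  rw [← coeff_zero_eq_constantCoeff_apply, coeff_subst' (.of_constantCoeff_zero' ha),
    finsum_eq_single _ 0]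
  · simp
  · intro d hd
    simp [ha, zero_pow hd]

variable [Algebra ℚ A]

theorem derivative_exp_subst {f : A⟦X⟧} (hf : HasSubst f) :
    d⁄dX A ((exp A).subst f) = (exp A).subst f * d⁄dX A f := by
  rw [derivative_subst hf, derivative_exp]

theorem exp_subst_add [IsAddTorsionFree A] {f g : A⟦X⟧} (hf : constantCoeff f = 0)
    (hg : constantCoeff g = 0) :
    (exp A).subst (f + g) = (exp A).subst f * (exp A).subst g := by
  have hf' := HasSubst.of_constantCoeff_zero' hf
  have hg' := HasSubst.of_constantCoeff_zero' hg
  refine eq_of_derivative_eq_mul (h := d⁄dX A (f + g)) ?_ ?_ ?_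
  · rw [derivative_exp_subst (hf'.add hg'), mul_comm]
  · rw [Derivation.leibniz, derivative_exp_subst hf', derivative_exp_subst hg', map_add,
      smul_eq_mul, smul_eq_mul]
    ring
  · rw [map_mul, constantCoeff_subst_of_constantCoeff_zero hf,
      constantCoeff_subst_of_constantCoeff_zero hg,
      constantCoeff_subst_of_constantCoeff_zero (by rw [map_add, hf, hg, add_zero]),
      constantCoeff_exp, one_mul]

end Exp

theorem coeff_pow_eq_coeff_trunc_pow_add {R : Type*} [CommSemiring R] (f : R⟦X⟧) {n : ℕ}
    (hn : n ≠ 0) (k : ℕ) :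
    coeff n (f ^ k) =
      coeff n ((trunc n f : R⟦X⟧) ^ k) + k * constantCoeff f ^ (k - 1) * coeff n f := by
  set T : R⟦X⟧ := ↑(trunc n f)
  set s : R⟦X⟧ := mk fun i ↦ coeff (i + n) f
  have hT : constantCoeff T = constantCoeff f := by
    rw [← coeff_zero_eq_constantCoeff_apply, ← coeff_zero_eq_constantCoeff_apply,
      coeff_coe_trunc_of_lt (Nat.pos_of_ne_zero hn)]
  have hW : constantCoeff (∑ i ∈ Finset.range k, f ^ i * T ^ (k - 1 - i)) =
      k * constantCoeff f ^ (k - 1) := by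
    simp only [map_sum, map_mul, map_pow, hT, ← pow_add]
    rw [Finset.sum_congr rfl fun i hi => by
      rw [show i + (k - 1 - i) = k - 1 by have := Finset.mem_range.mp hi; omega]]
    simp
  -- `f = X^n s + T` and `f^k - T^k = (∑ f^i T^(k-1-i)) X^n s`, whose `X^n`-coefficient only
  -- involves constant terms
  have hsplit := geom_sum₂_mul_add (X ^ n * s) T k
  rw [← eq_X_pow_mul_shift_add_trunc] at hsplit
  rw [← hsplit, map_add, add_comm, mul_left_comm, coeff_X_pow_mul', if_pos le_rfl, Nat.sub_self,
    coeff_zero_eq_constantCoeff_apply, map_mul, hW]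
  simp [s]

theorem norm_coeff_mul_sub_coeff_mul_constantCoeff_le {K : Type*} [NormedCommRing K]
    [IsUltrametricDist K] {F g : K⟦X⟧} {n : ℕ} {r : ℝ} (hr : 0 ≤ r)
    (hF : ∀ a < n, ‖coeff a F‖ ≤ 1) (hg : ∀ b ≠ 0, ‖coeff b g‖ ≤ r) :
    ‖coeff n (F * g) - coeff n F * constantCoeff g‖ ≤ r := by
  have hmem : (n, 0) ∈ Finset.HasAntidiagonal.antidiagonal n := by simp
  rw [coeff_mul, ← Finset.add_sum_erase _ _ hmem, coeff_zero_eq_constantCoeff_apply,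
    add_sub_cancel_left]
  refine IsUltrametricDist.norm_sum_le_of_forall_le_of_nonneg hr fun x hx => ?_
  have hsum := Finset.HasAntidiagonal.mem_antidiagonal.mp (Finset.mem_of_mem_erase hx)
  have hb : x.2 ≠ 0 := fun hb => Finset.ne_of_mem_erase hx (Prod.ext (by omega) hb)
  calc ‖coeff x.1 F * coeff x.2 g‖ ≤ ‖coeff x.1 F‖ * ‖coeff x.2 g‖ := norm_mul_le _ _
    _ ≤ 1 * r := mul_le_mul (hF _ (by omega)) (hg _ hb) (norm_nonneg _) zero_le_one
    _ = r := one_mul r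

end PowerSeries

open Polynomial in
theorem PadicInt.norm_coeff_pow_sub_expand_lt_one {p : ℕ} [Fact p.Prime] (T : ℤ_[p][X])
    (n : ℕ) : ‖(T ^ p - expand ℤ_[p] p T).coeff n‖ < 1 := by
  have hfrob : (T ^ p - expand ℤ_[p] p T).map toZMod = 0 := by
    rw [Polynomial.map_sub, Polynomial.map_pow, Polynomial.map_expand, ← map_frobenius_expand,
      ZMod.frobenius_zmod, Polynomial.map_id, sub_self]
  have hker : (T ^ p - expand ℤ_[p] p T).coeff n ∈ RingHom.ker (toZMod (p := p)) := by
    rw [RingHom.mem_ker, ← Polynomial.coeff_map, hfrob, Polynomial.coeff_zero]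
  rwa [ker_toZMod, IsLocalRing.mem_maximalIdeal, mem_nonunits] at hker

namespace Padic

variable {p : ℕ} [hp : Fact p.Prime]

theorem norm_coeff_pow_sub_coeff_expand_le {T : Polynomial ℚ_[p]}
    (hT : ∀ k, ‖T.coeff k‖ ≤ 1) (n : ℕ) :
    ‖(T ^ p).coeff n - (Polynomial.expand ℚ_[p] p T).coeff n‖ ≤ (p : ℝ)⁻¹ := by
  obtain ⟨T', rfl⟩ : ∃ T' : Polynomial ℤ_[p], T'.map PadicInt.Coe.ringHom = T := by
    rw [← Polynomial.mem_lifts, Polynomial.lifts_iff_coeff_lifts]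
    exact fun k => ⟨⟨T.coeff k, hT k⟩, rfl⟩
  have h := PadicInt.norm_coeff_pow_sub_expand_lt_one T' n
  rw [PadicInt.norm_def, Polynomial.coeff_sub, PadicInt.coe_sub] at h
  rw [← Polynomial.map_pow, ← Polynomial.map_expand, Polynomial.coeff_map,
    Polynomial.coeff_map, ← zpow_neg_one, norm_le_pow_iff_norm_lt_pow_add_one]
  exact h

/-- Dwork's integrality criterion, in the form `f(x)^p = f(x^p) g(x)` with `g ≡ 1 mod p`. -/
theorem norm_coeff_le_one_of_pow_eq_expand_mul {f g : ℚ_[p]⟦X⟧} (hf : constantCoeff f = 1)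
    (hg : ∀ b ≠ 0, ‖coeff b g‖ ≤ (p : ℝ)⁻¹) (hfg : f ^ p = expand p hp.out.ne_zero f * g)
    (n : ℕ) : ‖coeff n f‖ ≤ 1 := by
  induction n using Nat.strong_induction_on with
  | _ n ih =>
  rcases eq_or_ne n 0 with rfl | hn
  · simp [hf]
  set F := expand p hp.out.ne_zero f
  set T := trunc n f
  have hg0 : constantCoeff g = 1 := by
    simpa [F, hf] using (congrArg constantCoeff hfg).symm
  have hT : ∀ k, ‖T.coeff k‖ ≤ 1 := fun k => by
    rw [coeff_trunc]
    split_ifs with hk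
    · exact ih k hk
    · simp
  have hF : ∀ a < n, ‖coeff a F‖ ≤ 1 := fun a ha => by
    rw [coeff_expand]
    split_ifs
    · exact ih _ ((Nat.div_le_self a p).trans_lt ha)
    · simp
  have hFn : coeff n F = (Polynomial.expand ℚ_[p] p T).coeff n := by
    rw [coeff_expand, Polynomial.coeff_expand hp.out.pos, coeff_trunc,
      if_pos (Nat.div_lt_self (Nat.pos_of_ne_zero hn) hp.out.one_lt)]
  have hpow : coeff n (f ^ p) = (T ^ p).coeff n + p * coeff n f := by
    rw [coeff_pow_eq_coeff_trunc_pow_add f hn, hf, one_pow, mul_one, ← Polynomial.coe_pow,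
      Polynomial.coeff_coe]
  have hkey : (p : ℚ_[p]) * coeff n f =
      (coeff n (F * g) - coeff n F * constantCoeff g) -
        ((T ^ p).coeff n - (Polynomial.expand ℚ_[p] p T).coeff n) := by
    rw [← hfg, hpow, hg0, hFn]
    ring
  have hnorm : ‖(p : ℚ_[p]) * coeff n f‖ ≤ (p : ℝ)⁻¹ := by
    rw [hkey, sub_eq_add_neg]
    refine (nonarchimedean _ _).trans (max_le ?_ ?_)
    · exact norm_coeff_mul_sub_coeff_mul_constantCoeff_le (by positivity) hF hg
    · rw [norm_neg]
      exact norm_coeff_pow_sub_coeff_expand_le hT n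
  rw [norm_mul, norm_p] at hnorm
  exact le_of_mul_le_mul_left (by rwa [mul_one]) (by have := hp.out.pos; positivity)

theorem norm_coeff_rescale_exp_le {b : ℕ} (hb : b ≠ 0) :
    ‖coeff b (rescale (p : ℚ_[p]) (exp ℚ_[p]))‖ ≤ (p : ℝ)⁻¹ := by
  have hfact : (b.factorial : ℚ_[p]) ≠ 0 := by exact_mod_cast b.factorial_ne_zero
  have hv := padicValNat_factorial_lt_of_ne_zero (p := p) hb
  have hp1 : (1 : ℝ) ≤ p := by exact_mod_cast hp.out.one_le
  rw [coeff_rescale, coeff_exp, map_div₀, map_one, map_natCast, norm_mul, norm_div, norm_one,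
    norm_pow, norm_p, norm_eq_zpow_neg_valuation hfact, valuation_natCast, ← zpow_natCast,
    inv_zpow', one_div, ← zpow_neg, neg_neg, ← zpow_add₀ (by positivity), ← zpow_neg_one]
  exact zpow_le_zpow_right₀ hp1 (by omega)

end Padic

section ArtinHasse

variable {p : ℕ}

theorem coeff_ahLog_of_ne_pow {m : ℕ} (hm : ∀ j, p ^ j ≠ m) : coeff m (ahLog p) = 0 := by
  rw [ahLog, coeff_mk]
  exact Finset.sum_eq_zero fun j _ => if_neg (hm j)

variable [hp : Fact p.Prime]

theorem coeff_pow_ahLog (j : ℕ) : coeff (p ^ j) (ahLog p) = ((p : ℚ) ^ j)⁻¹ := by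
  rw [ahLog, coeff_mk, Finset.sum_eq_single_of_mem j
    (Finset.mem_range.mpr (Nat.lt_succ_of_lt (Nat.lt_pow_self hp.out.one_lt)))]
  · simp
  · exact fun i _ hij => if_neg fun h => hij (Nat.pow_right_injective hp.out.two_le h)

theorem constantCoeff_ahLog : constantCoeff (ahLog p) = 0 := by
  rw [← coeff_zero_eq_constantCoeff_apply]
  exact coeff_ahLog_of_ne_pow fun j => pow_ne_zero j hp.out.ne_zero

theorem natCast_smul_ahLog :
    (p : ℚ) • ahLog p = expand p hp.out.ne_zero (ahLog p) + (p : ℚ) • X := by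
  ext m
  simp only [map_add, coeff_smul, coeff_expand, coeff_X, smul_eq_mul]
  by_cases hpow : ∃ j, p ^ j = m
  · obtain ⟨j, rfl⟩ := hpow
    rw [coeff_pow_ahLog]
    rcases j with _ | j
    · simp [Nat.Prime.not_dvd_one hp.out]
    · have hp0 : (p : ℚ) ≠ 0 := by exact_mod_cast hp.out.ne_zero
      rw [if_pos (dvd_pow_self p j.succ_ne_zero),
        if_neg (Nat.one_lt_pow j.succ_ne_zero hp.out.one_lt).ne', Nat.pow_succ,
        Nat.mul_div_cancel _ hp.out.pos, coeff_pow_ahLog]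
      field_simp
      ring
  · push Not at hpow
    have hm1 : m ≠ 1 := fun h => hpow 0 (by simp [h])
    rw [coeff_ahLog_of_ne_pow hpow, if_neg hm1]
    split_ifs with hdvd
    · rw [coeff_ahLog_of_ne_pow fun j hj =>
        hpow (j + 1) (by rw [pow_succ', hj, Nat.mul_div_cancel' hdvd])]
      simp
    · simp

theorem coeff_ahLog_pow_of_lt {m n : ℕ} (h : m < n) : coeff m (ahLog p ^ n) = 0 :=
  X_pow_dvd_iff.mp (pow_dvd_pow_of_dvd (X_dvd_iff.mpr constantCoeff_ahLog) n) m h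

theorem artinHasse_eq_exp_subst : artinHasse p = (exp ℚ).subst (ahLog p) := by
  ext m
  rw [coeff_subst' (.of_constantCoeff_zero' constantCoeff_ahLog),
    finsum_eq_sum_of_support_subset (s := Finset.range (m + 1)), artinHasse, coeff_mk]
  · refine Finset.sum_congr rfl fun n _ => ?_
    rw [coeff_exp, smul_eq_mul]
    simp [div_eq_inv_mul]
  · intro n hn
    rw [Finset.coe_range, Set.mem_Iio]
    by_contra hmn
    rw [Function.mem_support] at hn
    exact hn (by rw [coeff_ahLog_pow_of_lt (by omega), smul_zero])

theorem artinHasse_pow_eq_expand_mul_rescale_exp :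
    artinHasse p ^ p = expand p hp.out.ne_zero (artinHasse p) * rescale (p : ℚ) (exp ℚ) := by
  have hS : HasSubst (ahLog p) := .of_constantCoeff_zero' constantCoeff_ahLog
  have hSp : constantCoeff (expand p hp.out.ne_zero (ahLog p)) = 0 := by
    rw [constantCoeff_expand, constantCoeff_ahLog]
  rw [artinHasse_eq_exp_subst]
  calc ((exp ℚ).subst (ahLog p)) ^ p = (exp ℚ ^ p).subst (ahLog p) := (subst_pow hS _ _).symm
    _ = (exp ℚ).subst ((p : ℚ) • ahLog p) := by
      rw [exp_pow_eq_rescale_exp, rescale_eq_subst, subst_comp_subst_apply (.smul_X' _) hS,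
        subst_smul hS, subst_X hS]
    _ = (exp ℚ).subst (expand p hp.out.ne_zero (ahLog p)) *
          (exp ℚ).subst ((p : ℚ) • X) := by
      rw [natCast_smul_ahLog, exp_subst_add hSp (by simp)]
    _ = _ := by
      rw [expand_apply, expand_apply, subst_comp_subst_apply hS (.X_pow hp.out.ne_zero),
        rescale_eq_subst]

theorem norm_coeff_artinHasse_le_one (n : ℕ) :
    ‖((coeff n (artinHasse p) : ℚ) : ℚ_[p])‖ ≤ 1 := by
  have hpow := congrArg (map (Rat.castHom ℚ_[p]))
    (artinHasse_pow_eq_expand_mul_rescale_exp (p := p))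
  rw [map_pow, map_mul, map_expand, ← rescale_map, map_exp, map_natCast] at hpow
  have h0 : constantCoeff (map (Rat.castHom ℚ_[p]) (artinHasse p)) = 1 := by
    rw [← coeff_zero_eq_constantCoeff_apply, coeff_map, artinHasse_eq_exp_subst,
      coeff_zero_eq_constantCoeff_apply, constantCoeff_subst_of_constantCoeff_zero
        constantCoeff_ahLog, constantCoeff_exp, map_one]
  have h := Padic.norm_coeff_le_one_of_pow_eq_expand_mul h0
    (fun _ hb => Padic.norm_coeff_rescale_exp_le hb) hpow n
  rwa [coeff_map] at h

end ArtinHasse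

theorem artinHasse_coeff_valuation_bound
    (p : ℕ) [hp : Fact (Nat.Prime p)]
    (v : AlgebraicClosure ℚ_[p] → WithTop ℝ)
    (hv0 : ∀ x, v x = ⊤ ↔ x = 0)
    (hv_mul : ∀ x y, v (x * y) = v x + v y)
    (hv_ext : ∀ x : ℚ_[p], x ≠ 0 →
      v (algebraMap ℚ_[p] (AlgebraicClosure ℚ_[p]) x) = ((x.valuation : ℝ) : WithTop ℝ))
    (γ : AlgebraicClosure ℚ_[p])
    (hγ : v γ = ((1 / (p - 1) : ℝ) : WithTop ℝ)) :
    ∀ m : ℕ,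
      (((m : ℝ) / (p - 1) : ℝ) : WithTop ℝ) ≤
        v (((PowerSeries.coeff m (artinHasse p) : ℚ) : AlgebraicClosure ℚ_[p]) * γ ^ m) := by
  intro m
  have hv1 : v 1 = 0 := by simpa using hv_ext 1 one_ne_zero
  have hvpow : ∀ k : ℕ, v (γ ^ k) = (((k : ℝ) / (p - 1) : ℝ) : WithTop ℝ) := by
    intro k
    induction k with
    | zero => simp [hv1]
    | succ k ih =>
      rw [pow_succ, hv_mul, ih, hγ, ← WithTop.coe_add, Nat.cast_succ, add_div, one_div]
  set q := PowerSeries.coeff m (artinHasse p)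
  rcases eq_or_ne (q : ℚ_[p]) 0 with hq | hq
  · rw [← map_ratCast (algebraMap ℚ_[p] (AlgebraicClosure ℚ_[p])), hq, map_zero, zero_mul,
      (hv0 0).mpr rfl]
    exact le_top
  have hval : 0 ≤ (q : ℚ_[p]).valuation :=
    (Padic.norm_le_one_iff_val_nonneg _).mp (norm_coeff_artinHasse_le_one m)
  rw [← map_ratCast (algebraMap ℚ_[p] (AlgebraicClosure ℚ_[p])), hv_mul, hv_ext _ hq, hvpow m,
    ← WithTop.coe_add, WithTop.coe_le_coe, le_add_iff_nonneg_left]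
  exact_mod_cast hval
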